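/- Let U and V be disjoint finite index sets and let p_i ≥ 0 for all i ∈ U ∪ V, with ∑_{i∈U} p_i^{3/2} > 0. Then ( (∑_{i∈V} p_i^{3/2}) · (∑_{i∈U} p_i²) ) / ( (∑_{i∈U∪V} p_i^{3/2}) · (∑_{i∈U} p_i^{3/2}) ) ≤ (∑_{i∈V} p_i^{3/2})^{1/3} ≤ ∑_{i∈V} p_i^{1/2}. -/

import Mathlib

/-!
Write `A = ∑_V p^{3/2}` and `B = ∑_U p^{3/2}`. For nonnegative `xᵢ` and `t ≥ 1` one has
`∑ xᵢ^t ≤ (∑ xᵢ)^t`; applied to `xᵢ = pᵢ^{3/2}` it gives `∑_U p² ≤ B^{4/3}` and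
`A^{1/3} ≤ ∑_V p^{1/2}`. Then `A · ∑_U p² ≤ A^{1/3} · (A^{2/3} B^{1/3}) · B`, and the geometric mean
`A^{2/3} B^{1/3}` is at most `max A B ≤ ∑_{U ∪ V} p^{3/2}`.
-/

open Finset

namespace Real

variable {ι : Type*} {s : Finset ι} {f : ι → ℝ} {t : ℝ}

theorem sum_rpow_le_rpow_sum (hf : ∀ i ∈ s, 0 ≤ f i) (ht : 1 ≤ t) :
    ∑ i ∈ s, f i ^ t ≤ (∑ i ∈ s, f i) ^ t := by
  have hsum : 0 ≤ ∑ i ∈ s, f i := sum_nonneg hf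
  calc ∑ i ∈ s, f i ^ t = ∑ i ∈ s, f i ^ (t - 1) * f i :=
        sum_congr rfl fun i hi => by rw [← rpow_add_one' (hf i hi) (by linarith), sub_add_cancel]
    _ ≤ ∑ i ∈ s, (∑ j ∈ s, f j) ^ (t - 1) * f i := sum_le_sum fun i hi =>
        mul_le_mul_of_nonneg_right (rpow_le_rpow (hf i hi) (single_le_sum hf hi) (by linarith))
          (hf i hi)
    _ = (∑ i ∈ s, f i) ^ t := by
        rw [← mul_sum, ← rpow_add_one' hsum (by linarith), sub_add_cancel]

theorem rpow_sum_le_sum_rpow (hf : ∀ i ∈ s, 0 ≤ f i) (ht₀ : 0 < t) (ht₁ : t ≤ 1) :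
    (∑ i ∈ s, f i) ^ t ≤ ∑ i ∈ s, f i ^ t := by
  have hft : ∀ i ∈ s, 0 ≤ f i ^ t := fun i hi => rpow_nonneg (hf i hi) t
  have hsum : ∑ i ∈ s, f i ≤ (∑ i ∈ s, f i ^ t) ^ t⁻¹ :=
    calc ∑ i ∈ s, f i = ∑ i ∈ s, (f i ^ t) ^ t⁻¹ :=
          sum_congr rfl fun i hi => (rpow_rpow_inv (hf i hi) ht₀.ne').symm
      _ ≤ (∑ i ∈ s, f i ^ t) ^ t⁻¹ := sum_rpow_le_rpow_sum hft ((one_le_inv₀ ht₀).2 ht₁)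
  calc (∑ i ∈ s, f i) ^ t ≤ ((∑ i ∈ s, f i ^ t) ^ t⁻¹) ^ t :=
        rpow_le_rpow (sum_nonneg hf) hsum ht₀.le
    _ = ∑ i ∈ s, f i ^ t := rpow_inv_rpow (sum_nonneg hft) ht₀.ne'

theorem rpow_mul_rpow_le_max {a b θ₁ θ₂ : ℝ} (ha : 0 ≤ a) (hb : 0 ≤ b) (hθ₁ : 0 ≤ θ₁)
    (hθ₂ : 0 ≤ θ₂) (hθ : θ₁ + θ₂ = 1) : a ^ θ₁ * b ^ θ₂ ≤ max a b := by
  have hmax : 0 ≤ max a b := le_max_of_le_left ha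
  calc a ^ θ₁ * b ^ θ₂ ≤ max a b ^ θ₁ * max a b ^ θ₂ := by
        gcongr
        exacts [le_max_left a b, le_max_right a b]
    _ = max a b := by rw [← rpow_add' hmax (by rw [hθ]; exact one_ne_zero), hθ, rpow_one]

end Real

open Real

theorem mul_div_mul_le_rpow_one_third {a b c d : ℝ} (ha : 0 ≤ a) (hb : 0 ≤ b)
    (hc : c ≤ b ^ ((4 : ℝ) / 3)) (hd : a ^ ((2 : ℝ) / 3) * b ^ ((1 : ℝ) / 3) ≤ d) :
    a * c / (d * b) ≤ a ^ ((1 : ℝ) / 3) := by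
  have hd₀ : 0 ≤ d := (by positivity : 0 ≤ a ^ ((2 : ℝ) / 3) * b ^ ((1 : ℝ) / 3)).trans hd
  refine div_le_of_le_mul₀ (by positivity) (by positivity) ?_
  calc a * c ≤ a * b ^ ((4 : ℝ) / 3) := by gcongr
    _ = a ^ ((1 : ℝ) / 3) * (a ^ ((2 : ℝ) / 3) * b ^ ((1 : ℝ) / 3) * b) := by
        rw [show a * b ^ ((4 : ℝ) / 3) = a ^ ((1 : ℝ) / 3 + 2 / 3) * b ^ ((1 : ℝ) / 3 + 1) by
          norm_num, rpow_add' ha (by norm_num), rpow_add' hb (by norm_num), rpow_one]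
        ring
    _ ≤ a ^ ((1 : ℝ) / 3) * (d * b) := by gcongr

theorem half_tsallis_residual_chain_general {ι : Type*} [DecidableEq ι]
    (U V : Finset ι)
    (p : ι → ℝ) (hp : ∀ i ∈ U ∪ V, 0 ≤ p i) :
    ((∑ i ∈ V, (p i) ^ ((3 : ℝ) / 2)) * (∑ i ∈ U, (p i) ^ 2)) /
        ((∑ i ∈ U ∪ V, (p i) ^ ((3 : ℝ) / 2)) * (∑ i ∈ U, (p i) ^ ((3 : ℝ) / 2)))
      ≤ (∑ i ∈ V, (p i) ^ ((3 : ℝ) / 2)) ^ ((1 : ℝ) / 3) ∧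
    (∑ i ∈ V, (p i) ^ ((3 : ℝ) / 2)) ^ ((1 : ℝ) / 3)
      ≤ ∑ i ∈ V, (p i) ^ ((1 : ℝ) / 2) := by
  have hq : ∀ i ∈ U ∪ V, 0 ≤ p i ^ ((3 : ℝ) / 2) := fun i hi => rpow_nonneg (hp i hi) _
  have hqU : ∀ i ∈ U, 0 ≤ p i ^ ((3 : ℝ) / 2) := fun i hi => hq i (mem_union_left V hi)
  have hqV : ∀ i ∈ V, 0 ≤ p i ^ ((3 : ℝ) / 2) := fun i hi => hq i (mem_union_right U hi)
  have hU : ∑ i ∈ U, p i ^ 2 ≤ (∑ i ∈ U, p i ^ ((3 : ℝ) / 2)) ^ ((4 : ℝ) / 3) :=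
    calc ∑ i ∈ U, p i ^ 2 = ∑ i ∈ U, (p i ^ ((3 : ℝ) / 2)) ^ ((4 : ℝ) / 3) := sum_congr rfl
          fun i hi => by rw [← rpow_mul (hp i (mem_union_left V hi))]; norm_num
      _ ≤ _ := sum_rpow_le_rpow_sum hqU (by norm_num)
  have hgeom : (∑ i ∈ V, p i ^ ((3 : ℝ) / 2)) ^ ((2 : ℝ) / 3) *
      (∑ i ∈ U, p i ^ ((3 : ℝ) / 2)) ^ ((1 : ℝ) / 3) ≤ ∑ i ∈ U ∪ V, p i ^ ((3 : ℝ) / 2) :=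
    (rpow_mul_rpow_le_max (sum_nonneg hqV) (sum_nonneg hqU) (by norm_num) (by norm_num)
      (by norm_num)).trans <| max_le
        (sum_le_sum_of_subset_of_nonneg subset_union_right fun i hi _ => hq i hi)
        (sum_le_sum_of_subset_of_nonneg subset_union_left fun i hi _ => hq i hi)
  refine ⟨mul_div_mul_le_rpow_one_third (sum_nonneg hqV) (sum_nonneg hqU) hU hgeom, ?_⟩
  calc (∑ i ∈ V, p i ^ ((3 : ℝ) / 2)) ^ ((1 : ℝ) / 3)
        ≤ ∑ i ∈ V, (p i ^ ((3 : ℝ) / 2)) ^ ((1 : ℝ) / 3) :=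
        rpow_sum_le_sum_rpow hqV (by norm_num) (by norm_num)
    _ = ∑ i ∈ V, p i ^ ((1 : ℝ) / 2) := sum_congr rfl
        fun i hi => by rw [← rpow_mul (hp i (mem_union_right U hi))]; norm_num

/-- The residual-regret inequality chain for the 1/2-Tsallis entropy (Section 4). -/
theorem half_tsallis_residual_chain {ι : Type*} [DecidableEq ι]
    (U V : Finset ι) (hUV : Disjoint U V)
    (p : ι → ℝ) (hp : ∀ i ∈ U ∪ V, 0 ≤ p i)
    (hU : 0 < ∑ i ∈ U, (p i) ^ ((3 : ℝ) / 2)) :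
    ((∑ i ∈ V, (p i) ^ ((3 : ℝ) / 2)) * (∑ i ∈ U, (p i) ^ 2)) /
        ((∑ i ∈ U ∪ V, (p i) ^ ((3 : ℝ) / 2)) * (∑ i ∈ U, (p i) ^ ((3 : ℝ) / 2)))
      ≤ (∑ i ∈ V, (p i) ^ ((3 : ℝ) / 2)) ^ ((1 : ℝ) / 3) ∧
    (∑ i ∈ V, (p i) ^ ((3 : ℝ) / 2)) ^ ((1 : ℝ) / 3)
      ≤ ∑ i ∈ V, (p i) ^ ((1 : ℝ) / 2) :=
  half_tsallis_residual_chain_general U V p hp
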